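/- arXiv:1711.07884 — 3 statements merged into one kernel-verified Lean document; each statement's English description precedes it below -/
import Mathlib

section
/- Sample m items without replacement from a finite list x_1,...,x_M of real numbers, obtaining X_1,...,X_m, and let S_m = X_1 + ... + X_m, μ = (1/M)·Σ x_i, y_0 = min x_i, y_1 = max x_i. Then for every t > 0, P[S_m ≥ mμ + mt] ≤ exp(-2mt²/(y_1 - y_0)²). -/
/-!
Chernoff's bound with `L = 4t/(y₁ - y₀)²` reduces the claim to bounding the average over the
injections `σ` of `∏ i, a (σ i)`, where `a j = exp (L x j)`. Grouping the injections by their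
image, this average is `e_m(a) / C(M, m)`, which Maclaurin's inequality bounds by `(mean a)^m`,
the corresponding average for sampling with replacement. Hoeffding's lemma for the uniform
distribution on the `x j` gives `mean a ≤ exp (L μ + L² (y₁ - y₀)² / 8)`.
-/

open Finset Nat Real MeasureTheory ProbabilityTheory

lemma Multiset.esymm_cons_succ {R : Type*} [CommSemiring R] (a : R) (s : Multiset R) (k : ℕ) :
    (a ::ₘ s).esymm (k + 1) = s.esymm (k + 1) + a * s.esymm k := by
  simp [esymm, map_map, sum_map_mul_left]

section OrderedField

variable {R : Type*} [Field R] [LinearOrder R] [IsStrictOrderedRing R]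

lemma pow_succ_add_mul_sub_le_pow_succ (k : ℕ) {u v : R} (hu : 0 ≤ u) (hv : 0 ≤ v) :
    u ^ (k + 1) + (k + 1) * u ^ k * (v - u) ≤ v ^ (k + 1) := by
  rcases hu.eq_or_lt with rfl | hu
  · cases k <;> simp [pow_nonneg hv]
  have hbernoulli :=
    one_add_mul_le_pow (a := v / u - 1) (by linarith [div_nonneg hv hu.le]) (k + 1)
  have hv' : v = u * (1 + (v / u - 1)) := by field_simp; ring
  calc u ^ (k + 1) + (k + 1) * u ^ k * (v - u)
      = u ^ (k + 1) * (1 + (k + 1 : ℕ) * (v / u - 1)) := by field_simp; push_cast; ring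
    _ ≤ u ^ (k + 1) * (1 + (v / u - 1)) ^ (k + 1) := by gcongr
    _ = v ^ (k + 1) := by rw [← mul_pow, ← hv']

namespace Multiset

lemma sum_eq_card_mul_sum_div_card (s : Multiset R) : s.sum = card s * (s.sum / card s) := by
  rcases eq_or_ne (card s) 0 with hn | hn
  · simp [card_eq_zero.mp hn]
  · rw [mul_div_cancel₀ _ (Nat.cast_ne_zero.mpr hn)]

theorem esymm_le_choose_mul_pow (s : Multiset R) (hs : ∀ a ∈ s, 0 ≤ a) (k : ℕ) :
    s.esymm k ≤ (card s).choose k * (s.sum / card s) ^ k := by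
  induction s using Multiset.induction_on generalizing k with
  | empty => cases k <;> simp [esymm, powersetCard_zero_right]
  | cons a s ih =>
    cases k with
    | zero => simp [esymm]
    | succ k =>
    have ha : 0 ≤ a := hs a (mem_cons_self a s)
    have hs' : ∀ b ∈ s, 0 ≤ b := fun b hb => hs b (mem_cons_of_mem hb)
    have hu : 0 ≤ s.sum / card s := div_nonneg (sum_nonneg hs') (Nat.cast_nonneg _)
    have hv : 0 ≤ (a ::ₘ s).sum / card (a ::ₘ s) :=
      div_nonneg (sum_nonneg hs) (Nat.cast_nonneg _)
    have hsum := sum_eq_card_mul_sum_div_card s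
    have hsum' := sum_eq_card_mul_sum_div_card (a ::ₘ s)
    generalize s.sum / card s = u at hu hsum ih
    generalize (a ::ₘ s).sum / card (a ::ₘ s) = v at hv hsum'
    rw [sum_cons, card_cons, hsum] at hsum'
    rw [card_cons]
    generalize card s = n at *
    push_cast at hsum' ⊢
    have hpascal : ((n + 1).choose (k + 1) : R) = n.choose (k + 1) + n.choose k := by
      rw [Nat.choose_succ_succ']; push_cast; ring
    have hsucc : ((n : R) + 1) * n.choose k = (n + 1).choose (k + 1) * (k + 1) := by
      exact_mod_cast Nat.add_one_mul_choose_eq n k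
    -- With `a = (n + 1) v - n u`, Pascal's rule and `(n + 1) C(n, k) = (k + 1) C(n + 1, k + 1)`
    -- collapse the inductive bound to the tangent line of `z ^ (k + 1)` at `u`, evaluated at `v`.
    calc (a ::ₘ s).esymm (k + 1) = s.esymm (k + 1) + a * s.esymm k := esymm_cons_succ a s k
      _ ≤ n.choose (k + 1) * u ^ (k + 1) + a * (n.choose k * u ^ k) :=
        add_le_add (ih hs' _) (mul_le_mul_of_nonneg_left (ih hs' _) ha)
      _ = (n + 1).choose (k + 1) * (u ^ (k + 1) + (k + 1) * u ^ k * (v - u)) := by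
        linear_combination -u ^ (k + 1) * hpascal + (n.choose k * u ^ k) * hsum'
          + (v * u ^ k - u ^ (k + 1)) * hsucc
      _ ≤ (n + 1).choose (k + 1) * v ^ (k + 1) :=
        mul_le_mul_of_nonneg_left (pow_succ_add_mul_sub_le_pow_succ k hu hv) (Nat.cast_nonneg _)

end Multiset

end OrderedField

namespace Function.Embedding

variable {ι : Type*} [Fintype ι] [DecidableEq ι]

lemma card_filter_map_univ_eq {m : ℕ} {t : Finset ι} (ht : #t = m) :
    #{σ : Fin m ↪ ι | univ.map σ = t} = m ! := by
  let e : {σ : Fin m ↪ ι // univ.map σ = t} ≃ (Fin m ↪ t) :=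
    { toFun σ := σ.1.codRestrict (· ∈ t) fun i =>
        σ.2.subset (mem_map_of_mem σ.1 (mem_univ i))
      invFun τ := ⟨τ.trans (Embedding.subtype _), eq_of_subset_of_card_le
        (fun _ hz => by obtain ⟨i, -, rfl⟩ := mem_map.mp hz; exact (τ i).2)
        (by rw [card_map, Finset.card_univ, Fintype.card_fin, ht])⟩
      left_inv _ := rfl
      right_inv _ := rfl }
  rw [← Fintype.card_subtype, Fintype.card_congr e, Fintype.card_embedding_eq, Fintype.card_coe,
    ht, Fintype.card_fin, Nat.descFactorial_self]

lemma sum_prod_eq_factorial_mul_esymm {R : Type*} [CommSemiring R] (a : ι → R) (m : ℕ) :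
    ∑ σ : Fin m ↪ ι, ∏ i, a (σ i) = m ! * (univ.val.map a).esymm m := by
  have hmaps : ∀ σ ∈ (univ : Finset (Fin m ↪ ι)), univ.map σ ∈ powersetCard m univ :=
    fun σ _ => mem_powersetCard.mpr ⟨subset_univ _, by simp⟩
  rw [esymm_map_val, ← sum_fiberwise_of_maps_to hmaps, mul_sum]
  refine sum_congr rfl fun t ht => ?_
  calc ∑ σ with univ.map σ = t, ∏ i, a (σ i)
      = ∑ σ with univ.map σ = t, ∏ j ∈ t, a j :=
        sum_congr rfl fun σ hσ => by rw [← (mem_filter.mp hσ).2, prod_map]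
    _ = m ! * ∏ j ∈ t, a j := by
        rw [sum_const, card_filter_map_univ_eq (mem_powersetCard.mp ht).2, nsmul_eq_mul]

theorem sum_prod_le_descFactorial_mul_pow {R : Type*} [Field R] [LinearOrder R]
    [IsStrictOrderedRing R] (a : ι → R) (ha : ∀ i, 0 ≤ a i) (m : ℕ) :
    ∑ σ : Fin m ↪ ι, ∏ i, a (σ i)
      ≤ (Fintype.card ι).descFactorial m * ((∑ i, a i) / Fintype.card ι) ^ m := by
  have hmaclaurin := (univ.val.map a).esymm_le_choose_mul_pow (by simpa using ha) m
  rw [Multiset.card_map, sum_map_val] at hmaclaurin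
  rw [sum_prod_eq_factorial_mul_esymm, Nat.descFactorial_eq_factorial_mul_choose, Nat.cast_mul,
    mul_assoc]
  exact mul_le_mul_of_nonneg_left hmaclaurin (Nat.cast_nonneg _)

end Function.Embedding

lemma integral_uniformOn_univ {ι : Type*} [Fintype ι] [MeasurableSpace ι]
    [MeasurableSingletonClass ι] (f : ι → ℝ) :
    ∫ i, f i ∂uniformOn (Set.univ : Set ι) = (∑ i, f i) / Fintype.card ι := by
  rw [integral_fintype .of_finite, sum_div]
  refine sum_congr rfl fun i _ => ?_
  simp [measureReal_def, uniformOn_univ, div_eq_inv_mul]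

theorem sum_exp_mul_div_card_le {ι : Type*} [Fintype ι] [Nonempty ι] (x : ι → ℝ) {a b : ℝ}
    (hx : ∀ i, x i ∈ Set.Icc a b) (L : ℝ) :
    (∑ i, exp (L * x i)) / Fintype.card ι
      ≤ exp (L * ((∑ i, x i) / Fintype.card ι) + L ^ 2 * (b - a) ^ 2 / 8) := by
  let _ : MeasurableSpace ι := ⊤
  have hsg := (hasSubgaussianMGF_of_mem_Icc (μ := uniformOn (Set.univ : Set ι))
    (measurable_of_countable x).aemeasurable (ae_of_all _ hx)).mgf_le L
  have hc : (((‖b - a‖₊ / 2) ^ 2 : NNReal) : ℝ) = (b - a) ^ 2 / 4 := by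
    simp [div_pow]; ring
  simp only [mgf, integral_uniformOn_univ, mul_sub, exp_sub, ← sum_div, hc] at hsg
  rw [exp_add, ← div_le_iff₀' (exp_pos _), div_right_comm]
  exact hsg.trans_eq (by ring_nf)

lemma card_filter_le_exp_mul_sum {α : Type*} (s : Finset α) (f : α → ℝ) (c : ℝ) {L : ℝ}
    (hL : 0 ≤ L) :
    (#{x ∈ s | c ≤ f x} : ℝ) ≤ exp (-(L * c)) * ∑ x ∈ s, exp (L * f x) := by
  rw [mul_sum]
  calc (#{x ∈ s | c ≤ f x} : ℝ) = ∑ x ∈ s with c ≤ f x, 1 := by simp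
    _ ≤ ∑ x ∈ s with c ≤ f x, exp (-(L * c)) * exp (L * f x) := sum_le_sum fun x hx => by
        rw [← exp_add]
        exact one_le_exp (by nlinarith [(mem_filter.mp hx).2])
    _ ≤ ∑ x ∈ s, exp (-(L * c)) * exp (L * f x) :=
        sum_le_sum_of_subset_of_nonneg (filter_subset _ _) fun _ _ _ => by positivity

theorem serfling_general (M m : ℕ) (x : Fin M → ℝ)
    (μ y0 y1 : ℝ) (hμ : μ = (∑ i, x i) / M)
    (hy0 : IsLeast (Set.range x) y0) (hy1 : IsGreatest (Set.range x) y1)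
    (t : ℝ) (ht : 0 < t) :
    (((Finset.univ : Finset (Fin m ↪ Fin M)).filter
        (fun σ => (m : ℝ) * μ + m * t ≤ ∑ i, x (σ i))).card : ℝ) /
      ((Finset.univ : Finset (Fin m ↪ Fin M)).card : ℝ)
      ≤ Real.exp (-2 * m * t ^ 2 / (y1 - y0) ^ 2) := by
  have hx : ∀ i, x i ∈ Set.Icc y0 y1 := fun i => ⟨hy0.2 ⟨i, rfl⟩, hy1.2 ⟨i, rfl⟩⟩
  have : Nonempty (Fin M) := hy0.1.elim fun i _ => ⟨i⟩
  rcases (hy0.2 hy1.1).eq_or_lt with hc | hc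
  · -- the bound is `exp (_ / 0) = 1`
    rw [hc, sub_self, zero_pow two_ne_zero, div_zero, exp_zero]
    exact div_le_one_of_le₀ (mod_cast card_le_card (filter_subset _ _)) (Nat.cast_nonneg _)
  set L := 4 * t / (y1 - y0) ^ 2
  refine div_le_of_le_mul₀ (Nat.cast_nonneg _) (exp_pos _).le ?_
  calc _ ≤ exp (-(L * (m * μ + m * t))) * ∑ σ : Fin m ↪ Fin M, exp (L * ∑ i, x (σ i)) :=
        card_filter_le_exp_mul_sum _ _ _ (by positivity)
    _ = exp (-(L * (m * μ + m * t))) * ∑ σ : Fin m ↪ Fin M, ∏ i, exp (L * x (σ i)) := by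
        simp_rw [mul_sum, exp_sum]
    _ ≤ exp (-(L * (m * μ + m * t))) *
          (M.descFactorial m * ((∑ j, exp (L * x j)) / M) ^ m) := by
        gcongr
        simpa using Function.Embedding.sum_prod_le_descFactorial_mul_pow _
          (fun j => (exp_pos (L * x j)).le) m
    _ ≤ exp (-(L * (m * μ + m * t))) *
          (M.descFactorial m * exp (L * μ + L ^ 2 * (y1 - y0) ^ 2 / 8) ^ m) := by
        gcongr
        simpa [hμ] using sum_exp_mul_div_card_le x hx L
    _ = exp (-2 * m * t ^ 2 / (y1 - y0) ^ 2) * #(univ : Finset (Fin m ↪ Fin M)) := by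
        rw [Finset.card_univ, Fintype.card_embedding_eq, Fintype.card_fin, Fintype.card_fin,
          ← exp_nat_mul, mul_left_comm, ← exp_add, mul_comm (exp _)]
        congr 2
        simp only [L]
        field_simp
        ring

/-- Serfling's inequality: sampling `m` values without replacement (uniformly over
injections `Fin m ↪ Fin M`) from `x_1,...,x_M`, with `μ` the mean, `y_0` the minimum
and `y_1` the maximum of the `x_i`, for every `t > 0` the probability that the sample
sum exceeds `mμ + mt` is at most `exp(-2mt²/(y_1-y_0)²)`. -/
theorem serfling (M m : ℕ) (hm : m ≤ M) (x : Fin M → ℝ)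
    (μ y0 y1 : ℝ) (hμ : μ = (∑ i, x i) / M)
    (hy0 : IsLeast (Set.range x) y0) (hy1 : IsGreatest (Set.range x) y1)
    (t : ℝ) (ht : 0 < t) :
    (((Finset.univ : Finset (Fin m ↪ Fin M)).filter
        (fun σ => (m : ℝ) * μ + m * t ≤ ∑ i, x (σ i))).card : ℝ) /
      ((Finset.univ : Finset (Fin m ↪ Fin M)).card : ℝ)
      ≤ Real.exp (-2 * m * t ^ 2 / (y1 - y0) ^ 2) :=
  serfling_general M m x μ y0 y1 hμ hy0 hy1 t ht
end

section
/- Fix k ≥ 2 and 0 < d < 1. The probability that some letter a_i (or its inverse) appears at least twice in some relator, when (2n-1)^{kd} relators are chosen and each relator is a cyclically reduced word of length k over {a_1^{±1},...,a_n^{±1}}, is at most k(k-1)·2n·(2n-1)^{dk}/(2n-2)², which tends to 0 as n → ∞ when d < 1/k. -/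
open scoped Classical

def invLetter {n : ℕ} (x : Fin n × Bool) : Fin n × Bool := (x.1, !x.2)

def CyclicallyReduced {n k : ℕ} (w : Fin k → Fin n × Bool) : Prop :=
  (∀ i : ℕ, ∀ h : i + 1 < k, w ⟨i + 1, h⟩ ≠ invLetter (w ⟨i, by omega⟩)) ∧
  (∀ h : 0 < k, w ⟨0, h⟩ ≠ invLetter (w ⟨k - 1, by omega⟩))

/-- The probability that, choosing uniformly a set of `⌊(2n-1)^{kd}⌋` distinct
cyclically reduced words of length `k` over `{a_1^{±1},...,a_n^{±1}}`, some relator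
contains a generator (or its inverse) at least twice. -/
noncomputable def repeatedLetterProb (k n : ℕ) (d : ℝ) : ℝ :=
  (((((Finset.univ : Finset (Fin k → Fin n × Bool)).filter
        (fun w => CyclicallyReduced w)).powersetCard
          ⌊(2 * (n : ℝ) - 1) ^ ((k : ℝ) * d)⌋₊).filter
      (fun R => ∃ w ∈ R, ∃ i j : Fin k, i ≠ j ∧ (w i).1 = (w j).1)).card : ℝ) /
    ((((Finset.univ : Finset (Fin k → Fin n × Bool)).filter
        (fun w => CyclicallyReduced w)).powersetCard
          ⌊(2 * (n : ℝ) - 1) ^ ((k : ℝ) * d)⌋₊).card : ℝ)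

/-!
Changing the letter of a cyclically reduced word at one position to anything but the inverses of
its two cyclic neighbours keeps it cyclically reduced and leaves at least `2n - 2` choices. Doing
this at two positions shows that prescribing both letters there divides the number of cyclically
reduced words by at least `(2n - 2)²`. A union bound over the `k.choose 2` pairs of positions and
the `4n` ways to place `a^{±1}` at both bounds the fraction of words with a repeated letter by
`k (k - 1) · 2n / (2n - 2)²`. A uniformly random `m`-subset of the words contains a given word with
probability `m / #words`, so by a second union bound the probability that some relator has a
repeated letter is at most `m ≤ (2n - 1)^{dk}` times that fraction.
-/

open Finset Function

theorem card_filter_apply_eq_mul_le {ι α : Type*} [Fintype ι] [DecidableEq ι] [Fintype α]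
    [DecidableEq α] (X : Finset (ι → α)) (p : ι) (c : α) {m : ℕ}
    (hX : ∀ w ∈ X, m ≤ #{x | update w p x ∈ X}) :
    #(X.filter (· p = c)) * m ≤ #X := by
  refine (card_mul_le_card_mul (fun w v => update w p (v p) = v) (fun w hw => ?_)
    fun v _ => ?_).trans_eq (mul_one _)
  · calc m ≤ #{x | update w p x ∈ X} := hX w (mem_filter.mp hw).1
      _ = #(({x | update w p x ∈ X} : Finset α).image (update w p)) :=
        (card_image_of_injective _ (update_injective w p)).symm
      _ ≤ _ := card_le_card fun v hv => by
        obtain ⟨x, hx, rfl⟩ := mem_image.mp hv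
        simp_all [bipartiteAbove]
  · refine card_le_one.mpr fun w hw w' hw' => ?_
    have recover : ∀ w, w p = c → update w p (v p) = v → w = update v p c := by
      rintro w rfl hv
      rw [← hv, update_idem, update_eq_self]
    simp only [bipartiteBelow, mem_filter] at hw hw'
    rw [recover w hw.1.2 hw.2, recover w' hw'.1.2 hw'.2]

theorem card_mul_le_card_mul_of_subset_biUnion {ι α : Type*} [DecidableEq α] {A : Finset α}
    {I : Finset ι} {T : ι → Finset α} {m M : ℕ} (hA : A ⊆ I.biUnion T)
    (hT : ∀ c ∈ I, #(T c) * m ≤ M) : #A * m ≤ #I * M :=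
  calc #A * m ≤ (∑ c ∈ I, #(T c)) * m :=
        Nat.mul_le_mul_right _ ((card_le_card hA).trans card_biUnion_le)
    _ = ∑ c ∈ I, #(T c) * m := sum_mul _ _ _
    _ ≤ ∑ _c ∈ I, M := sum_le_sum hT
    _ = #I * M := by rw [sum_const, smul_eq_mul]

theorem card_filter_powersetCard_exists_mul_le {α : Type*} [DecidableEq α] (S : Finset α)
    (p : α → Prop) [DecidablePred p] (m : ℕ) :
    #((S.powersetCard m).filter (fun R => ∃ x ∈ R, p x)) * #S ≤
      #(S.filter p) * m * #(S.powersetCard m) := by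
  rcases m with _ | m
  · simp
  rcases hS : #S with _ | s
  · simp
  have hcount : #((S.powersetCard (m + 1)).filter (fun R => ∃ x ∈ R, p x)) * 1 ≤
      #(S.filter p) * s.choose m := by
    refine card_mul_le_card_mul (fun R x => x ∈ R) (fun R hR => ?_) fun x hx => ?_
    · obtain ⟨hR, x, hxR, hx⟩ := mem_filter.mp hR
      exact card_pos.mpr ⟨x, by simp [bipartiteAbove, (mem_powersetCard.mp hR).1 hxR, hx, hxR]⟩
    · calc _ ≤ #((S.powersetCard (m + 1)).filter ({x} ⊆ ·)) :=
            card_le_card fun R hR => by simp_all [bipartiteBelow]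
        _ = s.choose m := by
          rw [card_filter_powersetCard_subset _ _ _ (by simpa using (mem_filter.mp hx).1)
            (by simp), hS, card_singleton, Nat.add_sub_cancel, Nat.add_sub_cancel]
  calc _ ≤ #(S.filter p) * s.choose m * (s + 1) := by
        simpa only [mul_one] using Nat.mul_le_mul_right (s + 1) hcount
    _ = _ := by
        rw [card_powersetCard, hS, mul_assoc, mul_comm _ (s + 1), Nat.add_one_mul_choose_eq]
        ring

theorem card_filter_powersetCard_exists_div_le {α : Type*} [DecidableEq α] (S : Finset α)
    (p : α → Prop) [DecidablePred p] (m : ℕ) :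
    (#((S.powersetCard m).filter (fun R => ∃ x ∈ R, p x)) : ℝ) / #(S.powersetCard m) ≤
      #(S.filter p) * m / #S := by
  rcases (#(S.powersetCard m)).eq_zero_or_pos with hP | hP
  · rw [hP, Nat.cast_zero, div_zero]
    positivity
  rcases (#S).eq_zero_or_pos with hS | hS
  · rw [card_eq_zero.mp hS, filter_false_of_mem fun R hR ⟨x, hx, _⟩ =>
      notMem_empty x ((mem_powersetCard.mp hR).1 hx)]
    simp
  rw [div_le_div_iff₀ (by positivity) (by positivity)]
  exact_mod_cast card_filter_powersetCard_exists_mul_le S p m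

section Words

variable {n k : ℕ}

theorem invLetter_invLetter (x : Fin n × Bool) : invLetter (invLetter x) = x := by
  simp [invLetter]

theorem invLetter_ne_self (x : Fin n × Bool) : invLetter x ≠ x := by
  simp [invLetter, Prod.ext_iff]

theorem cyclicallyReduced_iff_forall_add_one [NeZero k] (w : Fin k → Fin n × Bool) :
    CyclicallyReduced w ↔ ∀ p : Fin k, w (p + 1) ≠ invLetter (w p) := by
  obtain ⟨k, rfl⟩ := Nat.exists_eq_succ_of_ne_zero (NeZero.ne k)
  rw [Fin.forall_fin_succ']
  simp only [Fin.coeSucc_eq_succ, Fin.last_add_one]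
  refine and_congr ⟨fun h i => h i (by omega), fun h i hi => h ⟨i, by omega⟩⟩ ?_
  simp [Fin.last]

theorem CyclicallyReduced.update [NeZero k] {w : Fin k → Fin n × Bool}
    (hw : CyclicallyReduced w) {p : Fin k} {x : Fin n × Bool}
    (hx : x ∉ ({invLetter (w (p - 1)), invLetter (w (p + 1))} : Finset (Fin n × Bool))) :
    CyclicallyReduced (update w p x) := by
  rw [cyclicallyReduced_iff_forall_add_one] at hw ⊢
  simp only [mem_insert, mem_singleton, not_or] at hx
  intro q
  by_cases hq : q = p <;> by_cases hq' : q + 1 = p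
  · subst hq; simp only [hq', update_self]; exact (invLetter_ne_self x).symm
  · subst hq
    rw [update_of_ne hq', update_self]
    exact fun h => hx.2 (by rw [h, invLetter_invLetter])
  · rw [hq', update_self, update_of_ne hq, eq_sub_of_add_eq hq']; exact hx.1
  · rw [update_of_ne hq', update_of_ne hq]; exact hw q

theorem two_mul_sub_two_le_card_compl_pair (a b : Fin n × Bool) :
    2 * n - 2 ≤ #({a, b}ᶜ : Finset (Fin n × Bool)) := by
  rw [card_compl]
  have : #({a, b} : Finset (Fin n × Bool)) ≤ 2 := card_le_two
  simp only [Fintype.card_prod, Fintype.card_fin, Fintype.card_bool]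
  omega

noncomputable def cyclicallyReducedWords (n k : ℕ) : Finset (Fin k → Fin n × Bool) :=
  univ.filter CyclicallyReduced

theorem two_mul_sub_two_le_card_update_mem [NeZero k] {p : Fin k}
    {X : Finset (Fin k → Fin n × Bool)}
    (hX : ∀ w x, w ∈ X → CyclicallyReduced (update w p x) → update w p x ∈ X)
    {w : Fin k → Fin n × Bool} (hw : CyclicallyReduced w) (hwX : w ∈ X) :
    2 * n - 2 ≤ #{x | update w p x ∈ X} :=
  (two_mul_sub_two_le_card_compl_pair _ _).trans <| card_le_card fun x hx =>
    mem_filter.mpr ⟨mem_univ x, hX w x hwX (hw.update (mem_compl.mp hx))⟩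

theorem card_filter_apply_eq_apply_eq_mul_le {i j : Fin k} (hij : i ≠ j)
    (c c' : Fin n × Bool) :
    #((cyclicallyReducedWords n k).filter (fun w => w i = c ∧ w j = c')) * (2 * n - 2) ^ 2 ≤
      #(cyclicallyReducedWords n k) := by
  have : NeZero k := NeZero.of_pos i.pos
  have hW : ∀ {w}, w ∈ cyclicallyReducedWords n k ↔ CyclicallyReduced w := by
    simp [cyclicallyReducedWords]
  have hi := card_filter_apply_eq_mul_le ((cyclicallyReducedWords n k).filter (· j = c')) i c
    fun w hw => two_mul_sub_two_le_card_update_mem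
      (fun w x hw hx => mem_filter.mpr
        ⟨hW.mpr hx, by rw [update_of_ne hij.symm]; exact (mem_filter.mp hw).2⟩)
      (hW.mp (mem_filter.mp hw).1) hw
  have hj := card_filter_apply_eq_mul_le (cyclicallyReducedWords n k) j c'
    fun w hw => two_mul_sub_two_le_card_update_mem (fun w x _ hx => hW.mpr hx) (hW.mp hw) hw
  rw [filter_filter] at hi
  simp only [and_comm (a := _ = c')] at hi
  calc _ = #((cyclicallyReducedWords n k).filter (fun w => w i = c ∧ w j = c')) *
        (2 * n - 2) * (2 * n - 2) := by ring
    _ ≤ _ := (Nat.mul_le_mul_right _ hi).trans hj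

theorem card_filter_fst_eq_mul_le {i j : Fin k} (hij : i ≠ j) :
    #((cyclicallyReducedWords n k).filter (fun w => (w i).1 = (w j).1)) * (2 * n - 2) ^ 2 ≤
      4 * n * #(cyclicallyReducedWords n k) := by
  have hcover : (cyclicallyReducedWords n k).filter (fun w => (w i).1 = (w j).1) ⊆
      (univ : Finset (Fin n × Bool × Bool)).biUnion fun ⟨a, s, t⟩ =>
        (cyclicallyReducedWords n k).filter (fun w => w i = (a, s) ∧ w j = (a, t)) := by
    intro w hw
    rw [mem_filter] at hw
    exact mem_biUnion.mpr ⟨((w i).1, (w i).2, (w j).2), mem_univ _,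
      mem_filter.mpr ⟨hw.1, rfl, by rw [hw.2]⟩⟩
  have := card_mul_le_card_mul_of_subset_biUnion hcover
    fun c _ => card_filter_apply_eq_apply_eq_mul_le hij _ _
  simp only [card_univ, Fintype.card_prod, Fintype.card_fin, Fintype.card_bool] at this
  linarith

theorem card_filter_exists_fst_eq_mul_le :
    #((cyclicallyReducedWords n k).filter (fun w => ∃ i j : Fin k, i ≠ j ∧ (w i).1 = (w j).1)) *
      (2 * n - 2) ^ 2 ≤ k.choose 2 * (4 * n * #(cyclicallyReducedWords n k)) := by
  have hcover :
      (cyclicallyReducedWords n k).filter (fun w => ∃ i j : Fin k, i ≠ j ∧ (w i).1 = (w j).1) ⊆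
        (univ.powersetCard 2).biUnion fun s =>
          (cyclicallyReducedWords n k).filter (fun w => ∀ i ∈ s, ∀ j ∈ s, (w i).1 = (w j).1) := by
    intro w hw
    obtain ⟨hw, i, j, hij, hl⟩ := mem_filter.mp hw
    refine mem_biUnion.mpr ⟨{i, j}, mem_powersetCard.mpr ⟨subset_univ _, card_pair hij⟩, ?_⟩
    simp [hw, hl]
  have := card_mul_le_card_mul_of_subset_biUnion hcover fun s hs => by
    obtain ⟨i, j, hij, rfl⟩ := card_eq_two.mp (mem_powersetCard.mp hs).2
    refine le_trans (Nat.mul_le_mul_right _ (card_le_card ?_)) (card_filter_fst_eq_mul_le hij)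
    intro w hw
    rw [mem_filter] at hw ⊢
    exact ⟨hw.1, hw.2 i (by simp) j (by simp)⟩
  simpa using this

end Words

theorem card_cyclicallyReducedWords_pos {n : ℕ} [NeZero n] (k : ℕ) :
    0 < #(cyclicallyReducedWords n k) :=
  card_pos.mpr
    ⟨fun _ => (0, true), by simp [cyclicallyReducedWords, CyclicallyReduced, invLetter]⟩

theorem card_filter_exists_fst_eq_div_le {n : ℕ} (hn : 2 ≤ n) (k : ℕ) :
    (#((cyclicallyReducedWords n k).filter (fun w => ∃ i j : Fin k, i ≠ j ∧ (w i).1 = (w j).1)) :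
      ℝ) / #(cyclicallyReducedWords n k) ≤ k * (k - 1) * (2 * n) / (2 * n - 2) ^ 2 := by
  have : NeZero n := NeZero.of_pos (by omega)
  have hn' : (2 : ℝ) ≤ n := by exact_mod_cast hn
  have hW := card_cyclicallyReducedWords_pos (n := n) k
  rw [div_le_div_iff₀ (by positivity) (pow_pos (by linarith) 2)]
  have h : ((_ * (2 * n - 2) ^ 2 : ℕ) : ℝ) ≤ ((k.choose 2 * (4 * n * _) : ℕ) : ℝ) :=
    Nat.cast_le.mpr (card_filter_exists_fst_eq_mul_le (n := n) (k := k))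
  push_cast [Nat.cast_sub (by omega : 2 ≤ 2 * n), Nat.cast_choose_two] at h
  linarith

open Filter Topology in
theorem tendsto_mul_two_mul_rpow_div_sq {e : ℝ} (he : e < 1) (C : ℝ) :
    Tendsto (fun n : ℕ => C * (2 * (n : ℝ)) * (2 * (n : ℝ) - 1) ^ e / (2 * (n : ℝ) - 2) ^ 2)
      atTop (𝓝 0) := by
  have hbound : Tendsto (fun n : ℕ => 3 * (2 * (n : ℝ) - 1) ^ (e - 1)) atTop (𝓝 0) := by
    have h2n : Tendsto (fun n : ℕ => 2 * (n : ℝ) - 1) atTop atTop :=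
      tendsto_atTop_add_const_right _ (-1) (tendsto_natCast_atTop_atTop.const_mul_atTop two_pos)
    simpa [neg_sub] using ((tendsto_rpow_neg_atTop (sub_pos.mpr he)).comp h2n).const_mul 3
  have hu : Tendsto (fun n : ℕ => 2 * (n : ℝ) * (2 * (n : ℝ) - 1) ^ e / (2 * (n : ℝ) - 2) ^ 2)
      atTop (𝓝 0) := by
    refine squeeze_zero' ?_ ?_ hbound
    · filter_upwards [eventually_ge_atTop 1] with n hn
      have hn' : (1 : ℝ) ≤ n := by exact_mod_cast hn
      exact div_nonneg (mul_nonneg (by positivity) (Real.rpow_nonneg (by linarith) _))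
        (sq_nonneg _)
    · filter_upwards [eventually_ge_atTop 2] with n hn
      have hn' : (2 : ℝ) ≤ n := by exact_mod_cast hn
      have hpow : (2 * (n : ℝ) - 1) ^ e = (2 * (n : ℝ) - 1) ^ (e - 1) * (2 * n - 1) := by
        rw [← Real.rpow_add_one (by linarith), sub_add_cancel]
      have hy : 0 ≤ (2 * (n : ℝ) - 1) ^ (e - 1) := Real.rpow_nonneg (by linarith) _
      have hquad : 0 ≤ 3 * (2 * (n : ℝ) - 2) ^ 2 - 2 * n * (2 * n - 1) := by nlinarith
      rw [hpow, div_le_iff₀ (pow_pos (by linarith) 2)]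
      nlinarith [mul_nonneg hy hquad]
  simpa [mul_assoc, mul_div_assoc] using hu.const_mul C

theorem repeated_letter_prob_bound_general (k : ℕ) (d : ℝ) :
    (∀ n : ℕ, 2 ≤ n →
      repeatedLetterProb k n d ≤
        (k : ℝ) * ((k : ℝ) - 1) * (2 * (n : ℝ)) * (2 * (n : ℝ) - 1) ^ (d * (k : ℝ)) /
          (2 * (n : ℝ) - 2) ^ 2) ∧
    (d < 1 / (k : ℝ) → Filter.Tendsto
      (fun n : ℕ =>
        (k : ℝ) * ((k : ℝ) - 1) * (2 * (n : ℝ)) * (2 * (n : ℝ) - 1) ^ (d * (k : ℝ)) /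
          (2 * (n : ℝ) - 2) ^ 2)
      Filter.atTop (nhds 0)) := by
  refine ⟨fun n hn => ?_, fun hd => tendsto_mul_two_mul_rpow_div_sq ?_ _⟩
  · have hn' : (2 : ℝ) ≤ n := by exact_mod_cast hn
    have hm : (⌊(2 * (n : ℝ) - 1) ^ ((k : ℝ) * d)⌋₊ : ℝ) ≤ (2 * (n : ℝ) - 1) ^ (d * k) := by
      rw [mul_comm d]
      exact Nat.floor_le (Real.rpow_nonneg (by linarith) _)
    have hbad := card_filter_exists_fst_eq_div_le hn k
    calc repeatedLetterProb k n d ≤ _ :=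
          card_filter_powersetCard_exists_div_le (cyclicallyReducedWords n k) _ _
      _ = _ / _ * (⌊(2 * (n : ℝ) - 1) ^ ((k : ℝ) * d)⌋₊ : ℝ) := by ring
      _ ≤ k * (k - 1) * (2 * n) / (2 * n - 2) ^ 2 * (2 * (n : ℝ) - 1) ^ (d * k) :=
          mul_le_mul hbad hm (Nat.cast_nonneg _)
            ((div_nonneg (Nat.cast_nonneg _) (Nat.cast_nonneg _)).trans hbad)
      _ = _ := by ring
  · rcases k.eq_zero_or_pos with rfl | hk
    · simp
    · exact (lt_div_iff₀ (by positivity)).mp hd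

/-- The probability that some letter appears at least twice in some relator is at most
`k(k-1)·2n·(2n-1)^{dk}/(2n-2)²`, and this bound tends to `0` as `n → ∞` when `d < 1/k`. -/
theorem repeated_letter_prob_bound (k : ℕ) (hk : 2 ≤ k) (d : ℝ) (hd0 : 0 < d) (hd1 : d < 1) :
    (∀ n : ℕ, 2 ≤ n →
      repeatedLetterProb k n d ≤
        (k : ℝ) * ((k : ℝ) - 1) * (2 * (n : ℝ)) * (2 * (n : ℝ) - 1) ^ (d * (k : ℝ)) /
          (2 * (n : ℝ) - 2) ^ 2) ∧
    (d < 1 / (k : ℝ) → Filter.Tendsto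
      (fun n : ℕ =>
        (k : ℝ) * ((k : ℝ) - 1) * (2 * (n : ℝ)) * (2 * (n : ℝ) - 1) ^ (d * (k : ℝ)) /
          (2 * (n : ℝ) - 2) ^ 2)
      Filter.atTop (nhds 0)) :=
  repeated_letter_prob_bound_general k d
end

section
/- Fix k ≥ 2 and 0 < d < 1/k, and let c = kd - 1 < 0. For the positive model: the number of ℓ-tuples of positive length-k words fulfilling a cyclic relator diagram with (k-1)ℓ edges is exactly n^{(k-1)ℓ}, the probability that any fixed ℓ-tuple of distinct positive words all lie in a uniformly random set R of ⌊n^{kd}⌋ positive words (out of n^k total) is less than n^{kℓ(d-1)}, and hence the probability that some ℓ-tuple in R fulfils the diagram is at most n^{(kd-1)ℓ}. -/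
/-!
Labelling a cyclic diagram amounts to choosing the last `k - 1` letters of every word freely,
the first letter being forced by the previous word, whence `n^{(k-1)ℓ}` labellings. A fixed
`ℓ`-set lies in a uniform `E`-subset of an `N`-set with probability
`C(N-ℓ, E-ℓ)/C(N, E) = ∏_{i<ℓ} (E-i)/(N-i) < (E/N)^ℓ`, and `E/N ≤ n^{k(d-1)}`.
A union bound over the injective labellings multiplies the two estimates.
-/

open Finset

section CyclicChain

variable {ι α : Type*} (m : ℕ) (σ : Equiv.Perm ι)

def IsCyclicChain (w : ι → Fin (m + 2) → α) : Prop :=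
  ∀ j, w (σ j) 0 = w j (Fin.last (m + 1))

def cyclicChainEquiv : {w : ι → Fin (m + 2) → α // IsCyclicChain m σ w} ≃
      (ι → Fin (m + 1) → α) where
  toFun w j := Fin.tail (w.1 j)
  invFun f := ⟨fun j => Fin.cons (f (σ.symm j) (Fin.last m)) (f j), fun j => by
    simp [← Fin.succ_last]⟩
  left_inv w := by
    ext j : 2
    have h := w.2 (σ.symm j)
    rw [Equiv.apply_symm_apply] at h
    conv_rhs => rw [← Fin.cons_self_tail (w.1 j), h]
    simp [Fin.tail, ← Fin.succ_last]
  right_inv f := by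
    ext j : 1
    simp

theorem Nat.card_cyclicChain [Finite ι] [Finite α] :
    Nat.card {w : ι → Fin (m + 2) → α // IsCyclicChain m σ w} =
      Nat.card α ^ ((m + 1) * Nat.card ι) := by
  rw [Nat.card_congr (cyclicChainEquiv m σ), Nat.card_fun, Nat.card_fun, Nat.card_fin, pow_mul]

end CyclicChain

theorem Nat.choose_sub_mul_descFactorial {N E ℓ : ℕ} (h : ℓ ≤ E) :
    (N - ℓ).choose (E - ℓ) * N.descFactorial ℓ = E.descFactorial ℓ * N.choose E := by
  rw [Nat.descFactorial_eq_factorial_mul_choose, Nat.descFactorial_eq_factorial_mul_choose,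
    mul_left_comm, mul_comm _ (N.choose ℓ), ← Nat.choose_mul h]
  ring

section OrderedField

variable {K : Type*} [Field K] [LinearOrder K] [IsStrictOrderedRing K]

theorem sub_div_sub_le_div {x y i : K} (hi : 0 ≤ i) (hiy : i < y) (hxy : x ≤ y) :
    (x - i) / (y - i) ≤ x / y := by
  rw [div_le_div_iff₀ (by linarith) (by linarith)]
  nlinarith

theorem sub_div_sub_lt_div {x y i : K} (hi : 0 < i) (hiy : i < y) (hxy : x < y) :
    (x - i) / (y - i) < x / y := by
  rw [div_lt_div_iff₀ (by linarith) (by linarith)]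
  nlinarith

end OrderedField

theorem descFactorial_div_descFactorial_lt_pow {E N ℓ : ℕ} (hℓ : 2 ≤ ℓ) (hℓE : ℓ ≤ E)
    (hEN : E < N) :
    (E.descFactorial ℓ : ℝ) / N.descFactorial ℓ < ((E : ℝ) / N) ^ ℓ := by
  have hcast : ∀ M, ℓ ≤ M → (M.descFactorial ℓ : ℝ) = ∏ i ∈ range ℓ, ((M : ℝ) - i) := by
    intro M hM
    rw [Nat.descFactorial_eq_prod_range, Nat.cast_prod]
    exact prod_congr rfl fun i hi => Nat.cast_sub (by simp at hi; omega)
  have hEN' : (E : ℝ) < N := by exact_mod_cast hEN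
  rw [hcast E hℓE, hcast N (by omega), ← prod_div_distrib, pow_eq_prod_const]
  have hiE : ∀ i ∈ range ℓ, (i : ℝ) < E := fun i hi => by
    simp only [mem_range] at hi; exact_mod_cast hi.trans_le hℓE
  refine prod_lt_prod (fun i hi => ?_) (fun i hi => ?_) ⟨1, by simp; omega, ?_⟩
  · have := hiE i hi
    exact div_pos (by linarith) (by linarith)
  · exact sub_div_sub_le_div i.cast_nonneg (by linarith [hiE i hi]) hEN'.le
  · exact_mod_cast sub_div_sub_lt_div one_pos (by exact_mod_cast (by omega : 1 < N)) hEN'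

theorem card_filter_superset_div_card_lt {α : Type*} [Fintype α] [DecidableEq α]
    {a : Finset α} {E : ℕ} (ha : 2 ≤ #a) (hE0 : 0 < E) (hEN : E < Fintype.card α) :
    (#{R ∈ (univ : Finset α).powersetCard E | a ⊆ R} : ℝ) / #((univ : Finset α).powersetCard E) <
      ((E : ℝ) / Fintype.card α) ^ #a := by
  rcases lt_or_ge E #a with hlt | hle
  · have hempty : #{R ∈ (univ : Finset α).powersetCard E | a ⊆ R} = 0 :=
      card_eq_zero.2 <| filter_eq_empty_iff.2 fun R hR haR =>
        (card_le_card haR).not_gt ((mem_powersetCard.1 hR).2 ▸ hlt)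
    have hα : (0 : ℝ) < Fintype.card α := by exact_mod_cast hE0.trans hEN
    rw [hempty, Nat.cast_zero, zero_div]
    positivity
  · rw [card_filter_powersetCard_subset a univ E (subset_univ a) hle, card_powersetCard,
      card_univ]
    refine lt_of_eq_of_lt ?_ (descFactorial_div_descFactorial_lt_pow ha hle hEN)
    rw [div_eq_div_iff (by exact_mod_cast (Nat.choose_pos hEN.le).ne')
      (by exact_mod_cast (Nat.descFactorial_pos.2 (hle.trans hEN.le)).ne')]
    exact_mod_cast Nat.choose_sub_mul_descFactorial hle

theorem card_filter_exists_le_sum {β γ : Type*} (P : Finset β) (T : Finset γ)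
    (p : γ → β → Prop) [∀ w, DecidablePred (p w)] [DecidablePred fun R => ∃ w ∈ T, p w R] :
    #{R ∈ P | ∃ w ∈ T, p w R} ≤ ∑ w ∈ T, #{R ∈ P | p w R} := by
  classical
  refine (card_le_card fun R hR => ?_).trans card_biUnion_le
  obtain ⟨hRP, w, hw, hpR⟩ := mem_filter.1 hR
  exact mem_biUnion.2 ⟨w, hw, mem_filter.2 ⟨hRP, hpR⟩⟩

theorem card_filter_exists_injective_mem_div_card_le {ι α : Type*} [Fintype ι] [DecidableEq ι]
    [Fintype α] (q : (ι → α) → Prop) [DecidablePred q]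
    [DecidablePred fun R : Finset α => ∃ w, Function.Injective w ∧ q w ∧ ∀ j, w j ∈ R]
    (hι : 2 ≤ Fintype.card ι) {E : ℕ} (hE0 : 0 < E) (hEN : E < Fintype.card α) :
    (#{R ∈ (univ : Finset α).powersetCard E |
          ∃ w, Function.Injective w ∧ q w ∧ ∀ j, w j ∈ R} : ℝ) /
        #((univ : Finset α).powersetCard E) ≤
      #{w | q w} * ((E : ℝ) / Fintype.card α) ^ Fintype.card ι := by
  classical
  set P := (univ : Finset α).powersetCard E
  set T : Finset (ι → α) := {w | Function.Injective w ∧ q w}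
  have hexists : #{R ∈ P | ∃ w, Function.Injective w ∧ q w ∧ ∀ j, w j ∈ R} ≤
      #{R ∈ P | ∃ w ∈ T, ∀ j, w j ∈ R} := by
    refine card_le_card (monotone_filter_right _ ?_)
    rintro R - ⟨w, hinj, hq, hmem⟩
    exact ⟨w, mem_filter.2 ⟨mem_univ _, hinj, hq⟩, hmem⟩
  calc (#{R ∈ P | ∃ w, Function.Injective w ∧ q w ∧ ∀ j, w j ∈ R} : ℝ) / #P
      ≤ (∑ w ∈ T, #{R ∈ P | ∀ j, w j ∈ R} : ℕ) / #P := by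
        gcongr
        exact hexists.trans (card_filter_exists_le_sum P T fun w R => ∀ j, w j ∈ R)
    _ = ∑ w ∈ T, (#{R ∈ P | univ.image w ⊆ R} : ℝ) / #P := by
        simp only [image_subset_iff, mem_univ, true_implies, Nat.cast_sum, sum_div]
    _ ≤ ∑ _w ∈ T, ((E : ℝ) / Fintype.card α) ^ Fintype.card ι := by
        refine sum_le_sum fun w hw => ?_
        have hcard : #(univ.image w) = Fintype.card ι := by
          rw [card_image_of_injective _ (mem_filter.1 hw).2.1, card_univ]
        exact hcard ▸ (card_filter_superset_div_card_lt (hcard ▸ hι) hE0 hEN).le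
    _ = #T * ((E : ℝ) / Fintype.card α) ^ Fintype.card ι := by
        rw [sum_const, nsmul_eq_mul]
    _ ≤ _ := by
        gcongr
        exact monotone_filter_right _ fun _ _ hw => hw.2

theorem Nat.floor_rpow_lt_pow {n k : ℕ} (hn : 1 < n) {x : ℝ} (hx : x < k) :
    ⌊(n : ℝ) ^ x⌋₊ < n ^ k := by
  rw [Nat.floor_lt (by positivity), Nat.cast_pow, ← Real.rpow_natCast]
  exact Real.rpow_lt_rpow_of_exponent_lt (by exact_mod_cast hn) hx

theorem floor_rpow_mul_div_pow_pow_le {n : ℕ} (hn : 0 < n) (k ℓ : ℕ) (d : ℝ) :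
    ((⌊(n : ℝ) ^ ((k : ℝ) * d)⌋₊ : ℝ) / (n : ℝ) ^ k) ^ ℓ ≤ (n : ℝ) ^ ((k : ℝ) * ℓ * (d - 1)) :=
  calc ((⌊(n : ℝ) ^ ((k : ℝ) * d)⌋₊ : ℝ) / (n : ℝ) ^ k) ^ ℓ
      ≤ ((n : ℝ) ^ ((k : ℝ) * d) / (n : ℝ) ^ k) ^ ℓ := by
        gcongr
        exact Nat.floor_le (by positivity)
    _ = (n : ℝ) ^ ((k : ℝ) * ℓ * (d - 1)) := by
        rw [← Real.rpow_natCast _ k, ← Real.rpow_sub (by exact_mod_cast hn),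
          ← Real.rpow_natCast, ← Real.rpow_mul (by positivity)]
        ring_nf

open scoped Classical in
/-- In the positive model at density `0 < d < 1/k`: the number of `ℓ`-tuples of
positive length-`k` words labelling the cyclic relator diagram (each word's first
letter equal to the last letter of the previous word, cyclically) is exactly
`n^{(k-1)ℓ}`; the probability that a fixed set of `ℓ` distinct positive words lies in
a uniformly random set `R` of `⌊n^{kd}⌋` positive words is less than `n^{kℓ(d-1)}`;
and the probability that some injective `ℓ`-tuple in `R` fulfils the diagram is at
most `n^{(kd-1)ℓ}`. -/
theorem positive_model_diagram (n k ℓ : ℕ) (hn : 2 ≤ n) (hk : 2 ≤ k) (hℓ : 2 ≤ ℓ)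
    (d : ℝ) (hd0 : 0 < d) (hd1 : d < 1 / (k : ℝ)) :
    (Nat.card {w : Fin ℓ → Fin k → Fin n //
        ∀ j : Fin ℓ, w (j + ⟨1, by omega⟩) ⟨0, by omega⟩ = w j ⟨k - 1, by omega⟩}
      = n ^ ((k - 1) * ℓ)) ∧
    (∀ a : Finset (Fin k → Fin n), a.card = ℓ →
      ((((Finset.univ : Finset (Fin k → Fin n)).powersetCard
            ⌊(n : ℝ) ^ ((k : ℝ) * d)⌋₊).filter (fun R => a ⊆ R)).card : ℝ) /
          ((((Finset.univ : Finset (Fin k → Fin n)).powersetCard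
            ⌊(n : ℝ) ^ ((k : ℝ) * d)⌋₊).card : ℝ))
        < (n : ℝ) ^ ((k : ℝ) * (ℓ : ℝ) * (d - 1))) ∧
    (((((Finset.univ : Finset (Fin k → Fin n)).powersetCard
          ⌊(n : ℝ) ^ ((k : ℝ) * d)⌋₊).filter
        (fun R => ∃ w : Fin ℓ → Fin k → Fin n, Function.Injective w ∧
          (∀ j : Fin ℓ, w (j + ⟨1, by omega⟩) ⟨0, by omega⟩ = w j ⟨k - 1, by omega⟩) ∧
          ∀ j : Fin ℓ, w j ∈ R)).card : ℝ) /
        ((((Finset.univ : Finset (Fin k → Fin n)).powersetCard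
          ⌊(n : ℝ) ^ ((k : ℝ) * d)⌋₊).card : ℝ))
      ≤ (n : ℝ) ^ (((k : ℝ) * d - 1) * (ℓ : ℝ))) := by
  obtain ⟨m, rfl⟩ : ∃ m, k = m + 2 := ⟨k - 2, by omega⟩
  have : NeZero ℓ := ⟨by omega⟩
  set E := ⌊(n : ℝ) ^ (((m + 2 : ℕ) : ℝ) * d)⌋₊
  have hcard : Fintype.card (Fin (m + 2) → Fin n) = n ^ (m + 2) := by simp
  have hkd : ((m + 2 : ℕ) : ℝ) * d < 1 := (lt_div_iff₀' (by positivity)).1 hd1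
  have hE0 : 0 < E :=
    Nat.floor_pos.2 (Real.one_le_rpow (by exact_mod_cast (by omega : 1 ≤ n)) (by positivity))
  have hEN : E < Fintype.card (Fin (m + 2) → Fin n) :=
    hcard ▸ Nat.floor_rpow_lt_pow hn (by push_cast at hkd ⊢; linarith)
  have hdensity : ((E : ℝ) / Fintype.card (Fin (m + 2) → Fin n)) ^ ℓ ≤
      (n : ℝ) ^ (((m + 2 : ℕ) : ℝ) * (ℓ : ℝ) * (d - 1)) := by
    rw [hcard, Nat.cast_pow]
    exact floor_rpow_mul_div_pow_pow_le (by omega) (m + 2) ℓ d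
  have hchains := Nat.card_cyclicChain (α := Fin n) m (Equiv.addRight (⟨1, by omega⟩ : Fin ℓ))
  rw [Nat.card_fin, Nat.card_fin] at hchains
  refine ⟨hchains, fun a ha => ?_, ?_⟩
  · exact (ha ▸ card_filter_superset_div_card_lt (ha ▸ hℓ) hE0 hEN).trans_le hdensity
  · rw [Nat.card_eq_fintype_card, Fintype.card_subtype] at hchains
    have hunion := card_filter_exists_injective_mem_div_card_le
      (IsCyclicChain m (Equiv.addRight ⟨1, by omega⟩)) ((Fintype.card_fin ℓ).symm ▸ hℓ) hE0 hEN
    rw [Fintype.card_fin] at hunion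
    calc _ ≤ _ := by
          -- the filters differ only in their decidability instances, which `convert` identifies
          convert hunion using 5
          exact Iff.rfl
      _ ≤ (n ^ ((m + 1) * ℓ) : ℕ) * (n : ℝ) ^ (((m + 2 : ℕ) : ℝ) * (ℓ : ℝ) * (d - 1)) := by
          rw [← hchains]
          gcongr
      _ = _ := by
          rw [Nat.cast_pow, ← Real.rpow_natCast, ← Real.rpow_add (by positivity)]
          congr 1
          push_cast
          ring
end
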